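/- arXiv:1611.06546 — 2 statements merged into one kernel-verified Lean document; each statement's English description precedes it below -/
import Mathlib

section
/- If S is a maximal sum-free set in the elementary abelian 2-group G = (ℤ/2ℤ)^n (n ≥ 1) and x ∈ S, then the set H = xS = {xs : s ∈ S} is a subgroup of G of index 2, and S is the complement of H in G. -/
open Pointwise

/-- A subset `S` of an additive group is sum-free if for all `s₁, s₂ ∈ S`, `s₁ + s₂ ∉ S`. -/
def AddSumFree {G : Type*} [AddGroup G] (S : Set G) : Prop :=
  ∀ a ∈ S, ∀ b ∈ S, a + b ∉ S

/-- A maximal sum-free set: a (nonempty) sum-free set of maximum cardinality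
among all sum-free subsets. -/
def IsMaxAddSumFree {G : Type*} [AddGroup G] (S : Set G) : Prop :=
  S.Nonempty ∧ AddSumFree S ∧ ∀ T : Set G, AddSumFree T → T.ncard ≤ S.ncard

/-!
A sum-free set `S` is disjoint from its translate `x + S` for `x ∈ S`, so `2 |S| ≤ |G|`, and the
complement of a coordinate hyperplane attains this bound. For a maximum `S` this forces
`x + S = Sᶜ`. As every element of `(ℤ/2ℤ)ⁿ` is its own negative, `(x + s) + (x + t) = s + t ∉ S`,
so `Sᶜ` is closed under addition: it is a subgroup, of index 2 since `x ∉ Sᶜ` and `x + S = Sᶜ`.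
-/

variable {G : Type*}

section AddGroup

variable [AddGroup G] {S : Set G}

theorem AddSumFree.zero_notMem (hS : AddSumFree S) : (0 : G) ∉ S :=
  fun h0 ↦ hS 0 h0 0 h0 (by rwa [add_zero])

theorem AddSumFree.disjoint_vadd (hS : AddSumFree S) {x : G} (hx : x ∈ S) :
    Disjoint S (x +ᵥ S) := by
  rw [Set.disjoint_right]
  rintro _ ⟨s, hs, rfl⟩
  exact hS x hx s hs

theorem AddSumFree.two_mul_ncard_le [Finite G] (hS : AddSumFree S) :
    2 * S.ncard ≤ Nat.card G := by
  obtain rfl | ⟨x, hx⟩ := S.eq_empty_or_nonempty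
  · simp
  calc 2 * S.ncard = (S ∪ (x +ᵥ S)).ncard := by
        rw [Set.ncard_union_eq (hS.disjoint_vadd hx), Set.ncard_vadd_set, two_mul]
    _ ≤ Nat.card G := Set.ncard_le_card _

theorem AddSumFree.vadd_eq_compl [Finite G] (hS : AddSumFree S) (hcard : Nat.card G ≤ 2 * S.ncard)
    {x : G} (hx : x ∈ S) : x +ᵥ S = Sᶜ := by
  refine Set.eq_of_subset_of_ncard_le (hS.disjoint_vadd hx).subset_compl_left ?_
  rw [Set.ncard_compl, Set.ncard_vadd_set]
  omega

theorem AddSubgroup.addSumFree_compl_of_index_eq_two {K : AddSubgroup G} (hK : K.index = 2) :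
    AddSumFree (K : Set G)ᶜ :=
  fun _ ha _ hb hab ↦ hab ((K.add_mem_iff_of_index_two hK).2 (iff_of_false ha hb))

theorem AddSubgroup.two_mul_ncard_compl_of_index_eq_two [Finite G] {K : AddSubgroup G}
    (hK : K.index = 2) : 2 * (K : Set G)ᶜ.ncard = Nat.card G := by
  have h := K.index_mul_card
  have hcoe : (K : Set G).ncard = Nat.card K := (Nat.card_coe_set_eq _).symm
  rw [hK] at h
  rw [Set.ncard_compl, hcoe]
  omega

end AddGroup

theorem AddSumFree.exists_addSubgroup_coe_eq_vadd [AddCommGroup G] [Module (ZMod 2) G] [Finite G]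
    {S : Set G} (hS : AddSumFree S) (hcard : Nat.card G ≤ 2 * S.ncard) {x : G} (hx : x ∈ S) :
    ∃ H : AddSubgroup G, (H : Set G) = x +ᵥ S ∧ H.index = 2 ∧ S = (H : Set G)ᶜ := by
  have hcompl := hS.vadd_eq_compl hcard hx
  let H : AddSubgroup G :=
    { carrier := Sᶜ
      zero_mem' := hS.zero_notMem
      add_mem' := by
        rintro _ _ ha hb
        rw [← hcompl] at ha hb
        obtain ⟨s, hs, rfl⟩ := ha
        obtain ⟨t, ht, rfl⟩ := hb
        change (x + s) + (x + t) ∈ Sᶜ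
        rw [add_add_add_comm, ZModModule.add_self, zero_add]
        exact hS s hs t ht
      neg_mem' := by
        intro a ha
        rwa [ZModModule.neg_eq_self] }
  refine ⟨H, hcompl.symm, ?_, (compl_compl S).symm⟩
  rw [AddSubgroup.index_eq_two_iff_exists_notMem_and']
  refine ⟨x, not_not.2 hx, fun b ↦ ?_⟩
  by_cases hb : b ∈ S
  · left
    show x + b ∈ Sᶜ
    rw [← hcompl]
    exact Set.vadd_mem_vadd_set hb
  · exact .inr hb

/-- If `S` is a maximal sum-free set in `(ℤ/2ℤ)^n` and `x ∈ S`, then `x + S` is a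
subgroup of index 2, and `S` is its complement. -/
theorem maxSumFree_is_complement_two (n : ℕ) (hn : 1 ≤ n) (S : Set (Fin n → ZMod 2))
    (hS : IsMaxAddSumFree S) (x : Fin n → ZMod 2) (hx : x ∈ S) :
    ∃ H : AddSubgroup (Fin n → ZMod 2),
      (H : Set (Fin n → ZMod 2)) = x +ᵥ S ∧ H.index = 2 ∧
        S = (H : Set (Fin n → ZMod 2))ᶜ := by
  obtain ⟨-, hsf, hmax⟩ := hS
  set K := (Pi.evalAddMonoidHom (fun _ ↦ ZMod 2) (⟨0, hn⟩ : Fin n)).ker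
  have hK : K.index = 2 := by
    rw [AddSubgroup.index_ker, AddMonoidHom.range_eq_top.2 (Function.surjective_eval _),
      AddSubgroup.card_top, Nat.card_zmod]
  refine hsf.exists_addSubgroup_coe_eq_vadd ?_ hx
  calc Nat.card (Fin n → ZMod 2) = 2 * (K : Set (Fin n → ZMod 2))ᶜ.ncard :=
        (K.two_mul_ncard_compl_of_index_eq_two hK).symm
    _ ≤ 2 * S.ncard := Nat.mul_le_mul_left 2 (hmax _ (K.addSumFree_compl_of_index_eq_two hK))
end

section
/- For every prime p > 3 and every n ≥ 1, the elementary abelian p-group G = (ℤ/pℤ)^n contains a sum-free set of cardinality at least 2p^{n−1}; consequently, a maximal sum-free set in G has cardinality strictly greater than p^{n−1}, so no maximal sum-free set in G is a coset of a maximal subgroup. -/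
open Pointwise

/-!
The set of vectors whose first coordinate is `±1` is sum-free, since `{1, -1}` is sum-free
in `ℤ/pℤ` as soon as `p ∤ 3`; it has `2p^(n-1)` elements. A coset of a proper subgroup has at
most `p^(n-1)` elements, so it is too small to be a sum-free set of maximum size.
-/

theorem AddSumFree.preimage {G H : Type*} [AddGroup G] [AddGroup H] (f : G →+ H) {S : Set H}
    (hS : AddSumFree S) : AddSumFree (f ⁻¹' S) := by
  intro a ha b hb hab
  exact hS (f a) ha (f b) hb (by simpa only [Set.mem_preimage, map_add] using hab)

theorem addSumFree_one_neg_one {R : Type*} [CommRing R] [Nontrivial R] (h3 : (3 : R) ≠ 0) :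
    AddSumFree ({1, -1} : Set R) := by
  intro a ha b hb hab
  simp only [Set.mem_insert_iff, Set.mem_singleton_iff] at ha hb hab
  rcases ha with rfl | rfl <;> rcases hb with rfl | rfl <;> rcases hab with h | h <;>
    first
      | exact one_ne_zero (by linear_combination h)
      | exact one_ne_zero (by linear_combination -h)
      | exact h3 (by linear_combination h)
      | exact h3 (by linear_combination -h)

theorem IsMaxAddSumFree.ncard_le {G : Type*} [AddGroup G] {S T : Set G} (hS : IsMaxAddSumFree S)
    (hT : AddSumFree T) : T.ncard ≤ S.ncard :=
  hS.2.2 T hT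

theorem ZMod.natCast_ne_zero_of_pos_of_lt {p k : ℕ} (hk : 0 < k) (hkp : k < p) :
    (k : ZMod p) ≠ 0 := by
  rw [Ne, ZMod.natCast_eq_zero_iff]
  exact Nat.not_dvd_of_pos_of_lt hk hkp

theorem ncard_setOf_apply_zero_mem {α : Type*} [Fintype α] (m : ℕ)
    (s : Finset α) :
    {x : Fin (m + 1) → α | x 0 ∈ s}.ncard = s.card * Fintype.card α ^ m := by
  have hpi : {x : Fin (m + 1) → α | x 0 ∈ s} =
      ↑(Fintype.piFinset (Fin.cons s fun _ => Finset.univ : Fin (m + 1) → Finset α)) := by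
    ext x
    simp [Fin.forall_fin_succ]
  rw [hpi, Set.ncard_coe_finset, Fintype.card_piFinset, Fin.prod_univ_succ]
  simp

theorem AddSubgroup.card_le_pow_of_ne_top {G : Type*} [AddGroup G] [Finite G] {p k : ℕ}
    (hp : p.Prime) (hG : Nat.card G = p ^ (k + 1)) {H : AddSubgroup G} (hH : H ≠ ⊤) :
    Nat.card H ≤ p ^ k := by
  have hdvd : Nat.card H ∣ p ^ (k + 1) := hG ▸ H.card_addSubgroup_dvd_card
  obtain ⟨j, hj, hHj⟩ := (Nat.dvd_prime_pow hp).mp hdvd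
  have hjk : j ≠ k + 1 := by
    rintro rfl
    exact hH (H.eq_top_of_card_eq (hHj.trans hG.symm))
  exact hHj ▸ Nat.pow_le_pow_right hp.pos (by omega)

/-- For prime `p > 3` and `n ≥ 1`, `(ℤ/pℤ)^n` has a sum-free set of cardinality at
least `2p^(n-1)`; hence maximal sum-free sets have cardinality greater than `p^(n-1)`
and are not cosets of maximal subgroups. -/
theorem no_analogue_for_p_gt_three (p : ℕ) (hp : p.Prime) (hp3 : 3 < p) (n : ℕ)
    (hn : 1 ≤ n) :
    (∃ S : Set (Fin n → ZMod p), AddSumFree S ∧ 2 * p ^ (n - 1) ≤ S.ncard) ∧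
      (∀ S : Set (Fin n → ZMod p), IsMaxAddSumFree S → p ^ (n - 1) < S.ncard) ∧
      (∀ S : Set (Fin n → ZMod p), IsMaxAddSumFree S →
        ¬∃ M : AddSubgroup (Fin n → ZMod p), IsCoatom M ∧
          ∃ x : Fin n → ZMod p, S = x +ᵥ (M : Set (Fin n → ZMod p))) := by
  obtain ⟨m, rfl⟩ : ∃ m, n = m + 1 := ⟨n - 1, by omega⟩
  have : Fact p.Prime := ⟨hp⟩
  have h3 : (3 : ZMod p) ≠ 0 :=
    mod_cast ZMod.natCast_ne_zero_of_pos_of_lt (k := 3) (by norm_num) hp3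
  have h2 : (2 : ZMod p) ≠ 0 :=
    mod_cast ZMod.natCast_ne_zero_of_pos_of_lt (k := 2) (by norm_num) (by omega)
  let S₀ := Pi.evalAddMonoidHom (fun _ : Fin (m + 1) => ZMod p) 0 ⁻¹' {1, -1}
  have hS₀ : AddSumFree S₀ := (addSumFree_one_neg_one h3).preimage _
  have hcard : S₀.ncard = 2 * p ^ m := by
    have := ncard_setOf_apply_zero_mem m ({1, -1} : Finset (ZMod p))
    rw [ZMod.card, Finset.card_pair fun h => h2 (by linear_combination h)] at this
    simpa [S₀, Set.preimage, or_comm] using this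
  have hbig : ∀ S, IsMaxAddSumFree S → p ^ m < S.ncard := fun S hS =>
    (hcard ▸ hS.ncard_le hS₀).trans_lt' (by have := pow_pos hp.pos m; omega)
  refine ⟨⟨S₀, hS₀, hcard.ge⟩, hbig, ?_⟩
  rintro S hS ⟨M, hM, x, rfl⟩
  have hcoset : (x +ᵥ (M : Set (Fin (m + 1) → ZMod p))).ncard = Nat.card M := by
    rw [Set.ncard_vadd_set, ← Nat.card_coe_set_eq]; rfl
  exact (hbig _ hS).not_ge (hcoset ▸ M.card_le_pow_of_ne_top hp (by simp) hM.1)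
end
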